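/- arXiv:1308.0100 — 3 statements merged into one kernel-verified Lean document; each statement's English description precedes it below -/
import Mathlib

section
/- Let M be a smooth manifold and H a closed 3-form on M. The H-twisted Dorfman bracket on sections of TM ⊕ T*M, defined by [(u,a),(v,b)]_H := ([u,v], L_u b − ι_v da + ι_u ι_v H), satisfies the left Leibniz identity: [(u,a),[(v,b),(w,c)]_H]_H = [[(u,a),(v,b)]_H,(w,c)]_H + [(v,b),[(u,a),(w,c)]_H]_H. -/
/-- An abstract Cartan calculus: vector fields `X` (a Lie ring), graded forms `Ω n`,
with exterior derivative `d`, Lie derivative `L` and interior product `ι`, satisfying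
the standard Cartan calculus identities. This models the calculus of differential
forms on a smooth manifold. -/
structure CartanCalculus (X : Type*) [LieRing X] (Ω : ℕ → Type*)
    [∀ n, AddCommGroup (Ω n)] where
  d : ∀ n, Ω n → Ω (n + 1)
  L : ∀ n, X → Ω n → Ω n
  ι : ∀ n, X → Ω (n + 1) → Ω n
  d_add : ∀ n (ω η : Ω n), d n (ω + η) = d n ω + d n η
  L_add : ∀ n (u : X) (ω η : Ω n), L n u (ω + η) = L n u ω + L n u η
  L_addX : ∀ n (u v : X) (ω : Ω n), L n (u + v) ω = L n u ω + L n v ω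
  ι_add : ∀ n (u : X) (ω η : Ω (n + 1)), ι n u (ω + η) = ι n u ω + ι n u η
  ι_addX : ∀ n (u v : X) (ω : Ω (n + 1)), ι n (u + v) ω = ι n u ω + ι n v ω
  cartan : ∀ n (u : X) (ω : Ω (n + 1)),
    L (n + 1) u ω = d n (ι n u ω) + ι (n + 1) u (d (n + 1) ω)
  cartan0 : ∀ (u : X) (f : Ω 0), L 0 u f = ι 0 u (d 0 f)
  dL : ∀ n (u : X) (ω : Ω n), d n (L n u ω) = L (n + 1) u (d n ω)
  Lι : ∀ n (u v : X) (ω : Ω (n + 1)),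
    L n u (ι n v ω) - ι n v (L (n + 1) u ω) = ι n ⁅u, v⁆ ω
  LL : ∀ n (u v : X) (ω : Ω n), L n u (L n v ω) - L n v (L n u ω) = L n ⁅u, v⁆ ω
  dd : ∀ n (ω : Ω n), d (n + 1) (d n ω) = 0
  ιι : ∀ n (u v : X) (ω : Ω (n + 2)), ι n u (ι (n + 1) v ω) = -ι n v (ι (n + 1) u ω)

/-- The `H`-twisted Dorfman bracket on sections `(u,a)` of `TM ⊕ T*M`:
`[(u,a),(v,b)]_H = ([u,v], L_u b − ι_v da + ι_u ι_v H)`. -/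
def dorfmanH {X : Type*} [LieRing X] {Ω : ℕ → Type*} [∀ n, AddCommGroup (Ω n)]
    (C : CartanCalculus X Ω) (H : Ω 3) (p q : X × Ω 1) : X × Ω 1 :=
  (⁅p.1, q.1⁆,
    C.L 1 p.1 q.2 - C.ι 1 q.1 (C.d 1 p.2) + C.ι 1 p.1 (C.ι 2 q.1 H))

private lemma hom_sub' {A B : Type*} [AddCommGroup A] [AddCommGroup B] (f : A → B)
    (hf : ∀ x y, f (x + y) = f x + f y) (x y : A) : f (x - y) = f x - f y :=
  (AddMonoidHom.mk' f hf).map_sub x y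

private lemma hom_neg' {A B : Type*} [AddCommGroup A] [AddCommGroup B] (f : A → B)
    (hf : ∀ x y, f (x + y) = f x + f y) (x : A) : f (-x) = - f x :=
  (AddMonoidHom.mk' f hf).map_neg x

private lemma hom_zero' {A B : Type*} [AddCommGroup A] [AddCommGroup B] (f : A → B)
    (hf : ∀ x y, f (x + y) = f x + f y) : f 0 = 0 :=
  (AddMonoidHom.mk' f hf).map_zero

/-- For a closed 3-form `H`, the `H`-twisted Dorfman bracket satisfies
the left Leibniz identity. -/
theorem twisted_dorfman_leibniz
    {X : Type*} [LieRing X] {Ω : ℕ → Type*} [∀ n, AddCommGroup (Ω n)]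
    (C : CartanCalculus X Ω) (H : Ω 3) (hH : C.d 3 H = 0) :
    ∀ (u v w : X) (a b c : Ω 1),
      dorfmanH C H (u, a) (dorfmanH C H (v, b) (w, c))
        = dorfmanH C H (dorfmanH C H (u, a) (v, b)) (w, c)
          + dorfmanH C H (v, b) (dorfmanH C H (u, a) (w, c)) := by
  intro u v w a b c
  have dsub : ∀ n (x y : Ω n), C.d n (x - y) = C.d n x - C.d n y :=
    fun n => hom_sub' _ (C.d_add n)
  have lsub : ∀ n (x : X) (ω η : Ω n), C.L n x (ω - η) = C.L n x ω - C.L n x η :=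
    fun n x => hom_sub' _ (C.L_add n x)
  have isub : ∀ n (x : X) (ω η : Ω (n+1)), C.ι n x (ω - η) = C.ι n x ω - C.ι n x η :=
    fun n x => hom_sub' _ (C.ι_add n x)
  have izero : ∀ n (x : X), C.ι n x 0 = 0 := fun n x => hom_zero' _ (C.ι_add n x)
  have lzero : ∀ n (x : X), C.L n x 0 = 0 := fun n x => hom_zero' _ (C.L_add n x)
  have hLι : ∀ n (x y : X) (ω : Ω (n+1)),
      C.ι n ⁅x, y⁆ ω = C.L n x (C.ι n y ω) - C.ι n y (C.L (n+1) x ω) :=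
    fun n x y ω => (C.Lι n x y ω).symm
  have inegX : ∀ n (x : X) (ω : Ω (n+1)), C.ι n (-x) ω = - C.ι n x ω :=
    fun n x ω => hom_neg' (fun y => C.ι n y ω) (fun y z => C.ι_addX n y z ω) x
  simp only [dorfmanH, Prod.mk_add_mk, Prod.mk.injEq]
  refine ⟨leibniz_lie u v w, ?_⟩
  simp only [hLι, C.cartan 0, C.cartan 1, C.cartan 2, C.cartan0,
    C.L_add, C.ι_add, C.d_add, lsub, isub, dsub,
    C.dd 0, C.dd 1, C.dd 2, hH, izero, lzero, add_zero, sub_zero, zero_sub, zero_add]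
  have ii12 : ∀ (x y : X) (ω : Ω 3), C.ι 1 x (C.ι 2 y ω) = -C.ι 1 y (C.ι 2 x ω) :=
    C.ιι 1
  have ii01 : ∀ (x y : X) (ω : Ω 2), C.ι 0 x (C.ι 1 y ω) = -C.ι 0 y (C.ι 1 x ω) :=
    C.ιι 0
  have e2 : C.ι 1 ⁅u, v⁆ (C.ι 2 w H) = -C.ι 1 w (C.ι 2 ⁅u, v⁆ H) := ii12 ⁅u, v⁆ w H
  simp only [hLι, C.cartan 0, C.cartan 1, C.cartan 2, C.cartan0,
    C.L_add, C.ι_add, C.d_add, lsub, isub, dsub,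
    C.dd 0, C.dd 1, C.dd 2, hH, izero, lzero, add_zero, sub_zero, zero_sub, zero_add,
    Nat.reduceAdd] at e2
  simp only [Nat.reduceAdd]
  rw [ii12 u v (C.d 2 (C.ι 2 w H)), ii12 u w (C.d 2 (C.ι 2 v H)),
      ii12 v w (C.d 2 (C.ι 2 u H)), ii01 v u (C.ι 2 w H)]
  have dneg : ∀ n (x : Ω n), C.d n (-x) = -C.d n x :=
    fun n => hom_neg' _ (C.d_add n)
  rw [← sub_eq_zero] at e2 ⊢
  simp only [dneg]
  abel_nf at e2 ⊢
  exact e2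
end

section
/- Let M be a smooth manifold, n ≥ 1, and consider TM ⊕ Λ^n T*M with the higher Dorfman bracket [(u,a),(v,b)] := ([u,v], L_u b − ι_v da) for vector fields u,v and n-forms a,b. Then the higher Dorfman bracket satisfies the left Leibniz identity: [(u,a),[(v,b),(w,c)]] = [[(u,a),(v,b)],(w,c)] + [(v,b),[(u,a),(w,c)]]. -/
/-- The higher Dorfman bracket on sections `(u,a)` of `TM ⊕ Λ^n T*M` (here the form
degree is `n + 1 ≥ 1`): `[(u,a),(v,b)] = ([u,v], L_u b − ι_v da)`. -/
def higherDorfman {X : Type*} [LieRing X] {Ω : ℕ → Type*} [∀ n, AddCommGroup (Ω n)]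
    (C : CartanCalculus X Ω) (n : ℕ) (p q : X × Ω (n + 1)) : X × Ω (n + 1) :=
  (⁅p.1, q.1⁆, C.L (n + 1) p.1 q.2 - C.ι (n + 1) q.1 (C.d (n + 1) p.2))

/-- The higher Dorfman bracket on `TM ⊕ Λ^n T*M` (`n ≥ 1`) satisfies
the left Leibniz identity. -/
theorem higher_dorfman_leibniz
    {X : Type*} [LieRing X] {Ω : ℕ → Type*} [∀ n, AddCommGroup (Ω n)]
    (C : CartanCalculus X Ω) (n : ℕ) :
    ∀ (u v w : X) (a b c : Ω (n + 1)),
      higherDorfman C n (u, a) (higherDorfman C n (v, b) (w, c))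
        = higherDorfman C n (higherDorfman C n (u, a) (v, b)) (w, c)
          + higherDorfman C n (v, b) (higherDorfman C n (u, a) (w, c)) := by
  intro u v w a b c
  have Lsub : ∀ (x : X) (ω η : Ω (n+1)), C.L (n+1) x (ω - η)
      = C.L (n+1) x ω - C.L (n+1) x η :=
    fun x ω η => (AddMonoidHom.mk' (C.L (n+1) x) (C.L_add (n+1) x)).map_sub ω η
  have dsub : ∀ (ω η : Ω (n+1)), C.d (n+1) (ω - η) = C.d (n+1) ω - C.d (n+1) η :=
    fun ω η => (AddMonoidHom.mk' (C.d (n+1)) (C.d_add (n+1))).map_sub ω η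
  have ιsub : ∀ (x : X) (ω η : Ω (n+2)), C.ι (n+1) x (ω - η)
      = C.ι (n+1) x ω - C.ι (n+1) x η :=
    fun x ω η => (AddMonoidHom.mk' (C.ι (n+1) x) (C.ι_add (n+1) x)).map_sub ω η
  have ιzero : ∀ (x : X), C.ι (n+2) x (0 : Ω (n+3)) = 0 :=
    fun x => (AddMonoidHom.mk' (C.ι (n+2) x) (C.ι_add (n+2) x)).map_zero
  have e1 : C.L (n+1) ⁅u, v⁆ c
      = C.L (n+1) u (C.L (n+1) v c) - C.L (n+1) v (C.L (n+1) u c) :=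
    (C.LL (n+1) u v c).symm
  have e2 : C.ι (n+1) ⁅u, w⁆ (C.d (n+1) b)
      = C.L (n+1) u (C.ι (n+1) w (C.d (n+1) b))
        - C.ι (n+1) w (C.L (n+2) u (C.d (n+1) b)) :=
    (C.Lι (n+1) u w (C.d (n+1) b)).symm
  have e3 : C.L (n+2) u (C.d (n+1) b) = C.d (n+1) (C.L (n+1) u b) :=
    (C.dL (n+1) u b).symm
  have e4 : C.ι (n+1) ⁅v, w⁆ (C.d (n+1) a)
      = C.L (n+1) v (C.ι (n+1) w (C.d (n+1) a))
        - C.ι (n+1) w (C.L (n+2) v (C.d (n+1) a)) :=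
    (C.Lι (n+1) v w (C.d (n+1) a)).symm
  have e5 : C.L (n+2) v (C.d (n+1) a)
      = C.d (n+1) (C.ι (n+1) v (C.d (n+1) a)) := by
    rw [C.cartan (n+1) v (C.d (n+1) a), C.dd, ιzero, add_zero]
  simp only [higherDorfman, Prod.mk_add_mk, Prod.mk.injEq]
  refine ⟨leibniz_lie u v w, ?_⟩
  rw [Lsub, dsub, ιsub, Lsub, e1, e2, e3, e4, e5]
  abel
end

section
/- Let M be a smooth manifold, n ≥ 1, u,v,w vector fields and a,b,c n-forms, with L_u acting on forms. Define the pairing ⟨(u,a),(v,b)⟩ := ι_u b + ι_v a ∈ Ω^{n−1}(M). Then the higher Dorfman bracket satisfies: L_u⟨(v,b),(w,c)⟩ = ⟨[(u,a),(v,b)],(w,c)⟩ + ⟨(v,b),[(u,a),(w,c)]⟩. -/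
/-- The pairing `⟨(v,b),(w,c)⟩ = ι_v c + ι_w b ∈ Ω^{n-1}(M)` on `TM ⊕ Λ^n T*M`
(form degree `n + 1`, pairing lands in degree `n`). -/
def higherPairing {X : Type*} [LieRing X] {Ω : ℕ → Type*} [∀ n, AddCommGroup (Ω n)]
    (C : CartanCalculus X Ω) (n : ℕ) (p q : X × Ω (n + 1)) : Ω n :=
  C.ι n p.1 q.2 + C.ι n q.1 p.2

/-- The higher Dorfman bracket satisfies the invariance property
`L_u⟨(v,b),(w,c)⟩ = ⟨[(u,a),(v,b)],(w,c)⟩ + ⟨(v,b),[(u,a),(w,c)]⟩`. -/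
theorem higher_dorfman_invariance
    {X : Type*} [LieRing X] {Ω : ℕ → Type*} [∀ n, AddCommGroup (Ω n)]
    (C : CartanCalculus X Ω) (n : ℕ) :
    ∀ (u v w : X) (a b c : Ω (n + 1)),
      C.L n u (higherPairing C n (v, b) (w, c))
        = higherPairing C n (higherDorfman C n (u, a) (v, b)) (w, c)
          + higherPairing C n (v, b) (higherDorfman C n (u, a) (w, c)) := by
  intro u v w a b c
  have h0 : ∀ (x : X), C.ι n x (0 : Ω (n + 1)) = 0 := by
    intro x
    have := C.ι_add n x 0 0
    simpa using this.symm
  have hsub : ∀ (x : X) (ω η : Ω (n + 1)), C.ι n x (ω - η) = C.ι n x ω - C.ι n x η := by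
    intro x ω η
    have hneg : C.ι n x (-η) = -C.ι n x η := by
      have h := C.ι_add n x η (-η)
      rw [add_neg_cancel, h0] at h
      exact (eq_neg_of_add_eq_zero_right h.symm)
    rw [sub_eq_add_neg, C.ι_add, hneg, sub_eq_add_neg]
  have e1 : C.L n u (C.ι n v c) = C.ι n v (C.L (n + 1) u c) + C.ι n ⁅u, v⁆ c := by
    have := C.Lι n u v c
    rw [← this]; abel
  have e2 : C.L n u (C.ι n w b) = C.ι n w (C.L (n + 1) u b) + C.ι n ⁅u, w⁆ b := by
    have := C.Lι n u w b
    rw [← this]; abel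
  have e3 := C.ιι n w v (C.d (n + 1) a)
  simp only [higherPairing, higherDorfman]
  rw [C.L_add, e1, e2, hsub, hsub, e3]
  abel
end
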